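/- arXiv:2206.03575 — 2 statements merged into one kernel-verified Lean document; each statement's English description precedes it below -/
import Mathlib

section
/- The set {z·ỹ : ỹ ∈ Bias_{l,Δ}(y)} attains its maximum, and this maximum equals z·y + S, where S is the sum of the l largest values among the per-coordinate positive potential impacts ρ_i^+ = z_i δ_i^u if z_i ≥ 0 and ρ_i^+ = z_i δ_i^l if z_i < 0 (equivalently ρ_i^+ = max(z_i δ_i^l, z_i δ_i^u) = max over d ∈ [δ_i^l, δ_i^u] of z_i d). -/
open Matrix Set Finset

/-- The bias set: label vectors differing from `y` in at most `l` coordinates,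
with per-coordinate difference in `[δl i, δu i]`. -/
def Bias {n : ℕ} (y δl δu : Fin n → ℝ) (l : ℕ) : Set (Fin n → ℝ) :=
  {y' | (∀ i, y' i - y i ∈ Set.Icc (δl i) (δu i)) ∧
        (Finset.univ.filter (fun i => y' i ≠ y i)).card ≤ l}

/-- Dot product of two vectors in `ℝ^n`. -/
def dotR {n : ℕ} (z v : Fin n → ℝ) : ℝ := ∑ i, z i * v i

/-- Sum of the `l` largest entries of `ρ`. -/
noncomputable def topSum {n : ℕ} (ρ : Fin n → ℝ) (l : ℕ) : ℝ :=
  (((List.ofFn ρ).mergeSort (· ≥ ·)).take l).sum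

/-!
Write `ỹ = y + d`. Then `z·ỹ = z·y + ∑ i ∈ supp d, z i * d i`, and each term is at most
`ρ⁺ i = max (z i * δl i) (z i * δu i)`, with equality at an endpoint of `[δl i, δu i]`.
Hence the maximum is `z·y` plus the largest sum of at most `l` of the (nonnegative) `ρ⁺ i`.
That sum is the sum of the first `l` entries of the decreasingly sorted list: any sub-multiset
of at most `l` entries is dominated by exchanging its largest element for the head of the list.
-/

theorem List.Pairwise.sum_le_sum_take {α : Type*} [AddCommMonoid α] [LinearOrder α]
    [IsOrderedAddMonoid α] {L : List α} (hL : L.Pairwise (· ≥ ·)) (hL₀ : ∀ x ∈ L, 0 ≤ x)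
    {S : Multiset α} (hS : S ≤ L) {l : ℕ} (hl : Multiset.card S ≤ l) :
    S.sum ≤ (L.take l).sum := by
  induction L generalizing S l with
  | nil => simp [Multiset.le_zero.1 hS]
  | cons a L ih =>
    rw [List.pairwise_cons] at hL
    simp only [List.mem_cons, forall_eq_or_imp] at hL₀
    obtain _ | k := l
    · simp [Multiset.card_eq_zero.1 (Nat.le_zero.1 hl)]
    rw [List.take_succ_cons, List.sum_cons]
    have hcard_erase {b : α} (hb : b ∈ S) : Multiset.card (S.erase b) ≤ k := by
      rw [Multiset.card_erase_of_mem hb, Nat.pred_eq_sub_one]; omega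
    by_cases ha : a ∈ S
    · rw [← Multiset.cons_erase ha, Multiset.sum_cons]
      gcongr
      refine ih hL.2 hL₀.2 ?_ (hcard_erase ha)
      simpa using Multiset.erase_le_erase a hS
    · have hSL : S ≤ L := (Multiset.le_cons_of_notMem ha).1 hS
      obtain rfl | ⟨b, hb⟩ := S.empty_or_exists_mem
      · simpa using
          add_nonneg hL₀.1 (List.sum_nonneg fun x hx => hL₀.2 x (List.mem_of_mem_take hx))
      rw [← Multiset.cons_erase hb, Multiset.sum_cons]
      gcongr
      · exact hL.1 b (Multiset.mem_of_le hSL hb)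
      · exact ih hL.2 hL₀.2 ((Multiset.erase_le b S).trans hSL) (hcard_erase hb)

theorem sum_le_topSum {n : ℕ} {ρ : Fin n → ℝ} (hρ : ∀ i, 0 ≤ ρ i) {l : ℕ}
    {s : Finset (Fin n)} (hs : s.card ≤ l) : ∑ i ∈ s, ρ i ≤ topSum ρ l := by
  refine (List.pairwise_mergeSort' (· ≥ ·) _).sum_le_sum_take ?_ ?_ (by simpa using hs)
  · simpa [(List.mergeSort_perm _ _).mem_iff] using hρ
  · rw [(Multiset.coe_eq_coe.2 (List.mergeSort_perm _ _)), ← Fin.univ_val_map]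
    exact Multiset.map_le_map (Finset.val_le_iff.2 (Finset.subset_univ s))

theorem exists_sum_eq_topSum {n : ℕ} (ρ : Fin n → ℝ) (l : ℕ) :
    ∃ s : Finset (Fin n), s.card ≤ l ∧ ∑ i ∈ s, ρ i = topSum ρ l := by
  obtain ⟨t, htake, ht⟩ := ((List.take_sublist l _).subperm.trans
    (List.mergeSort_perm (List.ofFn ρ) _).subperm)
  rw [List.ofFn_eq_map] at ht
  obtain ⟨is, his, rfl⟩ := List.sublist_map_iff.1 ht
  have hnodup : is.Nodup := (List.nodup_finRange n).sublist his
  refine ⟨is.toFinset, ?_, ?_⟩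
  · rw [List.toFinset_card_of_nodup hnodup, ← List.length_map (f := ρ), htake.length_eq]
    exact List.length_take_le _ _
  · rw [List.sum_toFinset _ hnodup, htake.sum_eq, topSum]

theorem mul_le_max_mul_of_mem_Icc {z a b d : ℝ} (hd : d ∈ Icc a b) :
    z * d ≤ max (z * a) (z * b) := by
  rcases le_total 0 z with hz | hz
  · exact (mul_le_mul_of_nonneg_left hd.2 hz).trans (le_max_right _ _)
  · exact (mul_le_mul_of_nonpos_left hd.1 hz).trans (le_max_left _ _)

theorem exists_mem_Icc_mul_eq_max {a b : ℝ} (hab : a ≤ b) (z : ℝ) :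
    ∃ d ∈ Icc a b, z * d = max (z * a) (z * b) := by
  rcases max_choice (z * a) (z * b) with h | h
  · exact ⟨a, left_mem_Icc.2 hab, h.symm⟩
  · exact ⟨b, right_mem_Icc.2 hab, h.symm⟩

theorem dotR_eq_add_sum_mul_sub {n : ℕ} (z y y' : Fin n → ℝ) :
    dotR z y' = dotR z y + ∑ i, z i * (y' i - y i) := by
  simp only [dotR, mul_sub, Finset.sum_sub_distrib, add_sub_cancel]

section Bias

variable {n : ℕ} {z y δl δu : Fin n → ℝ} {l : ℕ}

theorem dotR_le_add_topSum_of_mem_Bias (hl : ∀ i, δl i ≤ 0) (hu : ∀ i, 0 ≤ δu i)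
    {y' : Fin n → ℝ} (hy' : y' ∈ Bias y δl δu l) :
    dotR z y' ≤ dotR z y + topSum (fun i => max (z i * δl i) (z i * δu i)) l := by
  obtain ⟨hIcc, hcard⟩ := hy'
  have hρ (i : Fin n) : 0 ≤ max (z i * δl i) (z i * δu i) := by
    simpa using mul_le_max_mul_of_mem_Icc (z := z i) ⟨hl i, hu i⟩
  have hsupp : ∑ i ∈ univ.filter (fun i => y' i ≠ y i), z i * (y' i - y i)
      = ∑ i, z i * (y' i - y i) :=
    Finset.sum_filter_of_ne fun i _ h he => h (by rw [he, sub_self, mul_zero])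
  rw [dotR_eq_add_sum_mul_sub z y y', ← hsupp]
  gcongr
  calc _ ≤ ∑ i ∈ univ.filter (fun i => y' i ≠ y i), max (z i * δl i) (z i * δu i) :=
        Finset.sum_le_sum fun i _ => mul_le_max_mul_of_mem_Icc (hIcc i)
    _ ≤ _ := sum_le_topSum hρ hcard

theorem exists_mem_Bias_dotR_eq_add_topSum (hl : ∀ i, δl i ≤ 0) (hu : ∀ i, 0 ≤ δu i) :
    ∃ y' ∈ Bias y δl δu l,
      dotR z y' = dotR z y + topSum (fun i => max (z i * δl i) (z i * δu i)) l := by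
  obtain ⟨s, hs, hsum⟩ := exists_sum_eq_topSum (fun i => max (z i * δl i) (z i * δu i)) l
  choose d hd hzd using fun i => exists_mem_Icc_mul_eq_max ((hl i).trans (hu i)) (z i)
  have hshift (i : Fin n) : s.piecewise (y + d) y i - y i = if i ∈ s then d i else 0 := by
    by_cases hi : i ∈ s <;> simp [hi]
  refine ⟨s.piecewise (y + d) y, ⟨fun i => ?_, ?_⟩, ?_⟩
  · rw [hshift]
    split_ifs
    exacts [hd i, ⟨hl i, hu i⟩]
  · refine (Finset.card_le_card fun i hi => ?_).trans hs
    by_contra his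
    simp [his] at hi
  · rw [dotR_eq_add_sum_mul_sub z y, ← hsum]
    simp only [hshift, mul_ite, mul_zero, Finset.sum_ite_mem, Finset.univ_inter, hzd]

end Bias

theorem stmt2_general {n : ℕ} (z y δl δu : Fin n → ℝ)
    (hl : ∀ i, δl i ≤ 0) (hu : ∀ i, 0 ≤ δu i) (l : ℕ) :
    IsGreatest ((fun y' => dotR z y') '' Bias y δl δu l)
      (dotR z y + topSum (fun i => max (z i * δl i) (z i * δu i)) l) := by
  refine ⟨exists_mem_Bias_dotR_eq_add_topSum hl hu, ?_⟩
  rintro _ ⟨y', hy', rfl⟩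
  exact dotR_le_add_topSum_of_mem_Bias hl hu hy'

/-- The maximum of `z·ỹ` over the bias set is attained and equals
`z·y` plus the sum of the `l` largest positive potential impacts
`ρ⁺ i = max (z i * δl i) (z i * δu i)`. -/
theorem stmt2 {n : ℕ} (z y δl δu : Fin n → ℝ)
    (hl : ∀ i, δl i ≤ 0) (hu : ∀ i, 0 ≤ δu i) (l : ℕ) (hln : l ≤ n) :
    IsGreatest ((fun y' => dotR z y') '' Bias y δl δu l)
      (dotR z y + topSum (fun i => max (z i * δl i) (z i * δu i)) l) :=
  stmt2_general z y δl δu hl hu l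
end

section
/- In the binary classification setting with labels in {0,1} and label-flip intervals, extremal perturbations are integral: with δ_i = [−1,0] when y_i = 1 and δ_i = [0,1] when y_i = 0, there exists a maximizer ỹ of z·ỹ over Bias_{l,Δ}(y) with ỹ ∈ {0,1}^n (i.e., the maximum over the relaxed set equals the maximum over pure label flips). -/
open Matrix Set Finset

/-- Integrality of extremal perturbations in the binary-label setting: with
label-flip intervals, some maximizer of `z·ỹ` over the bias set has all
coordinates in `{0,1}`. -/
theorem stmt15 {n : ℕ} (z y : Fin n → ℝ) (hy : ∀ i, y i = 0 ∨ y i = 1)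
    (l : ℕ) (hln : l ≤ n) :
    let δl : Fin n → ℝ := fun i => if y i = 1 then -1 else 0
    let δu : Fin n → ℝ := fun i => if y i = 1 then 0 else 1
    ∃ y' ∈ Bias y δl δu l, (∀ i, y' i = 0 ∨ y' i = 1) ∧
      ∀ y'' ∈ Bias y δl δu l, dotR z y'' ≤ dotR z y' := by
  intro δl δu
  classical
  set ρ : Fin n → ℝ := fun i => if y i = 1 then -z i else z i with hρ
  have hρ0 : ∀ i, y i = 0 → ρ i = z i := by
    intro i h0
    have : ¬ (y i = 1) := by rw [h0]; norm_num
    simp [hρ, this]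
  have hρ1 : ∀ i, y i = 1 → ρ i = -z i := by
    intro i h1; simp [hρ, h1]
  set P : Finset (Finset (Fin n)) :=
    Finset.univ.powerset.filter (fun S => S.card ≤ l) with hP
  have hPne : P.Nonempty := ⟨∅, by simp [hP]⟩
  obtain ⟨S, hSP, hSmax⟩ := P.exists_max_image (fun S => ∑ i ∈ S, max (ρ i) 0) hPne
  have hSl : S.card ≤ l := (Finset.mem_filter.mp hSP).2
  set y' : Fin n → ℝ := fun i => if i ∈ S ∧ 0 < ρ i then 1 - y i else y i with hy'
  have hy'flip : ∀ i, i ∈ S ∧ 0 < ρ i → y' i = 1 - y i := by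
    intro i h; rw [hy']; exact if_pos h
  have hy'eq : ∀ i, ¬(i ∈ S ∧ 0 < ρ i) → y' i = y i := by
    intro i h; rw [hy']; exact if_neg h
  have key : ∀ i, z i * y' i = z i * y i + (if i ∈ S then max (ρ i) 0 else 0) := by
    intro i
    by_cases hiS : i ∈ S
    · rw [if_pos hiS]
      by_cases hpos : 0 < ρ i
      · rw [hy'flip i ⟨hiS, hpos⟩, max_eq_left hpos.le]
        rcases hy i with h0 | h1
        · rw [hρ0 i h0, h0]; ring
        · rw [hρ1 i h1, h1]; ring
      · rw [hy'eq i (fun h => hpos h.2), max_eq_right (not_lt.mp hpos), add_zero]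
    · rw [if_neg hiS, hy'eq i (fun h => hiS h.1), add_zero]
  have hdot' : dotR z y' = dotR z y + ∑ i ∈ S, max (ρ i) 0 := by
    simp only [dotR, key, Finset.sum_add_distrib, Finset.sum_ite_mem,
      Finset.univ_inter]
  have hy01 : ∀ i, y' i = 0 ∨ y' i = 1 := by
    intro i
    by_cases h : i ∈ S ∧ 0 < ρ i
    · rw [hy'flip i h]
      rcases hy i with h0 | h1
      · right; rw [h0]; ring
      · left; rw [h1]; ring
    · rw [hy'eq i h]; exact hy i
  refine ⟨y', ⟨?_, ?_⟩, hy01, ?_⟩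
  · intro i
    rcases hy i with h | h <;> rcases hy01 i with h' | h' <;>
      norm_num [Set.mem_Icc, δl, δu, h, h']
  · refine le_trans (Finset.card_le_card ?_) hSl
    intro i hi
    simp only [Finset.mem_filter, Finset.mem_univ, true_and] at hi
    by_contra hiS
    exact hi (hy'eq i (fun h => hiS h.1))
  · rintro y'' ⟨hicc, hcard⟩
    set T : Finset (Fin n) := Finset.univ.filter (fun i => y'' i ≠ y i) with hT
    have hTP : T ∈ P := by
      simp only [hP, Finset.mem_filter, Finset.mem_powerset]
      exact ⟨Finset.subset_univ _, hcard⟩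
    have hterm : ∀ i, z i * y'' i ≤ z i * y i + (if y'' i ≠ y i then max (ρ i) 0 else 0) := by
      intro i
      by_cases hne : y'' i = y i
      · simp [hne]
      · rw [if_pos hne]
        have hIcc := hicc i
        simp only [Set.mem_Icc] at hIcc
        have h2 : z i * (y'' i - y i) ≤ max (ρ i) 0 := by
          rcases hy i with h0 | h1
          · have hne1 : ¬ (y i = 1) := by rw [h0]; norm_num
            have hl' : (0:ℝ) ≤ y'' i - y i := by simpa [δl, hne1] using hIcc.1
            have hu' : y'' i - y i ≤ 1 := by simpa [δu, hne1] using hIcc.2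
            rw [hρ0 i h0]
            nlinarith [le_max_left (z i) 0, le_max_right (z i) 0,
              mul_nonneg (sub_nonneg.2 (le_max_left (z i) 0)) hl',
              mul_nonneg (le_max_right (z i) 0) (sub_nonneg.2 hu')]
          · have hl' : (-1:ℝ) ≤ y'' i - y i := by simpa [δl, h1] using hIcc.1
            have hu' : y'' i - y i ≤ 0 := by simpa [δu, h1] using hIcc.2
            rw [hρ1 i h1]
            nlinarith [le_max_left (-z i) 0, le_max_right (-z i) 0,
              mul_nonneg (by linarith [le_max_left (-z i) 0] :
                (0:ℝ) ≤ max (-z i) 0 + z i) (by linarith : (0:ℝ) ≤ -(y'' i - y i)),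
              mul_nonneg (le_max_right (-z i) 0) (by linarith : (0:ℝ) ≤ 1 + (y'' i - y i))]
        calc z i * y'' i = z i * y i + z i * (y'' i - y i) := by ring
          _ ≤ z i * y i + max (ρ i) 0 := by linarith
    have hsum : dotR z y'' ≤ dotR z y + ∑ i ∈ T, max (ρ i) 0 := by
      have := Finset.sum_le_sum (fun i (_ : i ∈ Finset.univ) => hterm i)
      simpa [dotR, Finset.sum_add_distrib, hT, Finset.sum_filter] using this
    calc dotR z y'' ≤ dotR z y + ∑ i ∈ T, max (ρ i) 0 := hsum
      _ ≤ dotR z y + ∑ i ∈ S, max (ρ i) 0 := by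
          have := hSmax T hTP
          linarith
      _ = dotR z y' := hdot'.symm
end
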